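/- 2G − π·log 2/4 = 2·Im Li₂((1/√2)·e^{3πi/4}) + Im Li₂((1/2)·e^{πi/2}), where G is Catalan's constant. -/

import Mathlib

noncomputable def Li (s : ℕ) (z : ℂ) : ℂ := ∑' k : ℕ, z ^ (k + 1) / ((k : ℂ) + 1) ^ s

noncomputable def LiR (s : ℕ) (x : ℝ) : ℝ := ∑' k : ℕ, x ^ (k + 1) / ((k : ℝ) + 1) ^ s

noncomputable def catalanG : ℝ := ∑' k : ℕ, (-1 : ℝ) ^ k / (2 * (k : ℝ) + 1) ^ 2

/-!
Landen's identity `Li₂ z + Li₂ (z / (z - 1)) = -log (1 - z) ^ 2 / 2` holds on the part of the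
closed unit disc where `re z ≤ 1 / 2`: both sides vanish at `0`, and the difference has zero
derivative along the segment from `0`, since `z * Li₂' z = Li₁ z = -log (1 - z)` and
`1 - z / (z - 1) = (1 - z)⁻¹`. At `z = i` we have `z / (z - 1) = (1 - i) / 2`, `Im Li₂ i = G` and
`log (1 - i) = log 2 / 2 - iπ / 4`; as `Li₂` commutes with conjugation, this gives
`Im Li₂ ((1 + i) / 2) = G - π log 2 / 8`. The duplication formula
`Li₂ w + Li₂ (-w) = Li₂ (w ^ 2) / 2` at `w = (1 + i) / 2`, where `w ^ 2 = i / 2` and `-w` is the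
conjugate of `(-1 + i) / 2`, then supplies the remaining term.
-/

open Complex Metric Set ComplexConjugate

section Polylog

variable {s : ℕ} {z : ℂ}

lemma summable_one_div_nat_add_one_pow (hs : 1 < s) :
    Summable (fun k : ℕ => 1 / ((k : ℝ) + 1) ^ s) := by
  simpa using (summable_nat_add_iff 1).mpr (Real.summable_one_div_nat_pow.mpr hs)

lemma norm_pow_succ_div_le (hz : ‖z‖ ≤ 1) (k : ℕ) :
    ‖z ^ (k + 1) / ((k : ℂ) + 1) ^ s‖ ≤ 1 / ((k : ℝ) + 1) ^ s := by
  rw [norm_div, norm_pow, norm_pow]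
  norm_cast
  gcongr
  exact pow_le_one₀ (norm_nonneg z) hz

lemma hasSum_Li (hs : 1 < s) (hz : ‖z‖ ≤ 1) :
    HasSum (fun k : ℕ => z ^ (k + 1) / ((k : ℂ) + 1) ^ s) (Li s z) :=
  (Summable.of_norm_bounded (summable_one_div_nat_add_one_pow hs) (norm_pow_succ_div_le hz)).hasSum

lemma continuousOn_Li (hs : 1 < s) : ContinuousOn (Li s) (closedBall 0 1) :=
  continuousOn_tsum (fun k => by fun_prop) (summable_one_div_nat_add_one_pow hs)
    (fun k z hz => norm_pow_succ_div_le (mem_closedBall_zero_iff.mp hz) k)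

lemma Li_conj : Li s (conj z) = conj (Li s z) := by
  simp [Li, conj_tsum, map_div₀]

lemma im_Li_conj : (Li s (conj z)).im = -(Li s z).im := by
  rw [Li_conj, conj_im]

lemma Li_one (hz : ‖z‖ < 1) : Li 1 z = -log (1 - z) := by
  simpa [Li] using (hasSum_taylorSeries_neg_log' hz).tsum_eq

lemma mul_tsum_pow_div_eq_Li :
    z * ∑' k : ℕ, z ^ k / ((k : ℂ) + 1) ^ s = Li s z := by
  rw [← tsum_mul_left]
  simp only [Li, pow_succ', mul_div_assoc]

lemma hasDerivAt_Li_succ (hz : ‖z‖ < 1) :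
    HasDerivAt (Li (s + 1)) (∑' k : ℕ, z ^ k / ((k : ℂ) + 1) ^ s) z := by
  obtain ⟨r, hzr, hr1⟩ := exists_between hz
  have hr0 : 0 < r := (norm_nonneg z).trans_lt hzr
  unfold Li
  refine hasDerivAt_tsum_of_isPreconnected
    (g := fun (k : ℕ) (y : ℂ) => y ^ (k + 1) / ((k : ℂ) + 1) ^ (s + 1))
    (g' := fun k y => y ^ k / ((k : ℂ) + 1) ^ s) (summable_geometric_of_lt_one hr0.le hr1)
    isOpen_ball (convex_ball 0 r).isPreconnected (fun k y _ => ?_) (fun k y hy => ?_)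
    (mem_ball_self hr0) ?_ (mem_ball_zero_iff.mpr hzr)
  · refine ((hasDerivAt_pow (k + 1) y).div_const (((k : ℂ) + 1) ^ (s + 1))).congr_deriv ?_
    have hk : (k : ℂ) + 1 ≠ 0 := Nat.cast_add_one_ne_zero k
    rw [Nat.add_sub_cancel]
    push_cast
    field_simp
    ring
  · rw [norm_div, norm_pow, norm_pow]
    calc ‖y‖ ^ k / ‖(k : ℂ) + 1‖ ^ s ≤ ‖y‖ ^ k :=
          div_le_self (by positivity) (one_le_pow₀ (by norm_cast; simp))
      _ ≤ r ^ k := pow_le_pow_left₀ (norm_nonneg y) (mem_ball_zero_iff.mp hy).le k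
  · exact summable_zero.congr fun k => by simp

lemma Li_add_Li_neg (hs : 1 < s) (hz : ‖z‖ ≤ 1) :
    Li s z + Li s (-z) = 2 / 2 ^ s * Li s (z ^ 2) := by
  have hsq : ‖z ^ 2‖ ≤ 1 := by rw [norm_pow]; exact pow_le_one₀ (norm_nonneg z) hz
  set f := fun k : ℕ => z ^ (k + 1) / ((k : ℂ) + 1) ^ s + (-z) ^ (k + 1) / ((k : ℂ) + 1) ^ s
  have heven : HasSum (fun m => f (2 * m)) 0 :=
    hasSum_zero.congr_fun fun m => by simp [f, pow_succ, pow_mul, neg_div]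
  have hodd : HasSum (fun m => f (2 * m + 1)) (2 / 2 ^ s * Li s (z ^ 2)) :=
    ((hasSum_Li hs hsq).mul_left (2 / 2 ^ s)).congr_fun fun m => by
      have hm : (m : ℂ) + 1 ≠ 0 := Nat.cast_add_one_ne_zero m
      have hcast : ((2 * m + 1 : ℕ) : ℂ) + 1 = 2 * ((m : ℂ) + 1) := by push_cast; ring
      simp only [f, hcast, show 2 * m + 1 + 1 = 2 * (m + 1) by ring, pow_mul, neg_sq, mul_pow]
      field_simp
      ring
  simpa using ((hasSum_Li hs hz).add (hasSum_Li hs (by rwa [norm_neg]))).unique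
    (heven.even_add_odd hodd)

lemma im_Li_I (hs : 1 < s) :
    (Li s I).im = ∑' k : ℕ, (-1 : ℝ) ^ k / (2 * (k : ℝ) + 1) ^ s := by
  set g : ℕ → ℝ := fun k => (I ^ (k + 1) / ((k : ℂ) + 1) ^ s).im
  have hg : HasSum g (Li s I).im := hasSum_im (hasSum_Li hs (by simp))
  have hneg (m : ℕ) : (-1 : ℂ) ^ m = ((-1 : ℝ) ^ m : ℝ) := by push_cast; rfl
  have heven : ∀ m : ℕ, g (2 * m) = (-1 : ℝ) ^ m / (2 * (m : ℝ) + 1) ^ s := by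
    intro m
    have hc : ((2 * m : ℕ) : ℂ) + 1 = ((2 * m + 1 : ℝ) : ℂ) := by push_cast; ring
    simp only [g]
    rw [hc, pow_succ, pow_mul, I_sq, hneg, ← ofReal_pow, div_ofReal_im, mul_I_im, ofReal_re]
  have hodd : HasSum (fun m => g (2 * m + 1)) 0 :=
    hasSum_zero.congr_fun fun m => by
      have hc : ((2 * m + 1 : ℕ) : ℂ) + 1 = ((2 * m + 2 : ℝ) : ℂ) := by push_cast; ring
      simp only [g, hc, show 2 * m + 1 + 1 = 2 * (m + 1) by ring, pow_mul, I_sq, hneg,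
        ← ofReal_pow, div_ofReal_im, ofReal_im, zero_div]
  have hbeta :
      HasSum (fun m => g (2 * m)) (∑' k : ℕ, (-1 : ℝ) ^ k / (2 * (k : ℝ) + 1) ^ s) := by
    simpa only [Function.comp_def, heven] using
      (hg.summable.comp_injective (mul_right_injective₀ (two_ne_zero' ℕ))).hasSum
  simpa using hg.unique (hbeta.even_add_odd hodd)

end Polylog

section Landen

variable {z : ℂ}

lemma norm_le_norm_sub_one_iff : ‖z‖ ≤ ‖z - 1‖ ↔ z.re ≤ 1 / 2 := by
  rw [← sq_le_sq₀ (norm_nonneg _) (norm_nonneg _), Complex.sq_norm, Complex.sq_norm,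
    normSq_apply, normSq_apply]
  simp only [sub_re, one_re, sub_im, one_im, sub_zero]
  constructor <;> intro h <;> nlinarith

lemma norm_lt_norm_sub_one_iff : ‖z‖ < ‖z - 1‖ ↔ z.re < 1 / 2 := by
  rw [← sq_lt_sq₀ (norm_nonneg _) (norm_nonneg _), Complex.sq_norm, Complex.sq_norm,
    normSq_apply, normSq_apply]
  simp only [sub_re, one_re, sub_im, one_im, sub_zero]
  constructor <;> intro h <;> nlinarith

lemma sub_one_ne_zero_of_re_lt_one (h : z.re < 1) : z - 1 ≠ 0 := by
  intro h0
  simp [sub_eq_zero.mp h0] at h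

lemma one_sub_mem_slitPlane (h : z.re < 1) : 1 - z ∈ slitPlane :=
  Or.inl (by simpa using h)

lemma one_sub_div_sub_one (h : z - 1 ≠ 0) : 1 - z / (z - 1) = (1 - z)⁻¹ := by
  have h' : 1 - z ≠ 0 := fun h0 => h (by linear_combination -h0)
  field_simp
  ring

noncomputable def landenDefect (z : ℂ) : ℂ :=
  Li 2 z + Li 2 (z / (z - 1)) + log (1 - z) ^ 2 / 2

lemma landenDefect_zero : landenDefect 0 = 0 := by
  simp [landenDefect, Li]

lemma hasDerivAt_landenDefect (hz : ‖z‖ < 1) (hre : z.re < 1 / 2) :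
    HasDerivAt landenDefect 0 z := by
  have hz1 : z - 1 ≠ 0 := sub_one_ne_zero_of_re_lt_one (by linarith)
  have hw : ‖z / (z - 1)‖ < 1 := by
    rw [norm_div, div_lt_one (norm_pos_iff.mpr hz1)]
    exact norm_lt_norm_sub_one_iff.mpr hre
  have hslit : 1 - z ∈ slitPlane := one_sub_mem_slitPlane (by linarith)
  have hmob : HasDerivAt (fun y => y / (y - 1)) (-1 / (z - 1) ^ 2) z := by
    refine ((hasDerivAt_id z).div ((hasDerivAt_id z).sub_const 1) hz1).congr_deriv ?_
    simp only [id, one_mul, mul_one]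
    ring
  have hlog : HasDerivAt (fun y => log (1 - y)) (-1 / (1 - z)) z :=
    ((hasDerivAt_id z).const_sub 1).clog hslit
  refine ((((hasDerivAt_Li_succ hz).add ((hasDerivAt_Li_succ hw).comp z hmob)).add
    ((hlog.pow 2).div_const 2))).congr_deriv ?_
  set D₁ := ∑' k : ℕ, z ^ k / ((k : ℂ) + 1) ^ 1
  set D₂ := ∑' k : ℕ, (z / (z - 1)) ^ k / ((k : ℂ) + 1) ^ 1
  rcases eq_or_ne z 0 with rfl | hz0
  · simp [D₁, D₂]
  have hD₁ : z * D₁ = -log (1 - z) := by rw [mul_tsum_pow_div_eq_Li, Li_one hz]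
  have hD₂ : z / (z - 1) * D₂ = log (1 - z) := by
    rw [mul_tsum_pow_div_eq_Li, Li_one hw, one_sub_div_sub_one hz1,
      log_inv _ (slitPlane_arg_ne_pi hslit), neg_neg]
  have h1z : 1 - z ≠ 0 := fun h0 => hz1 (by linear_combination -h0)
  rw [eq_div_of_mul_eq hz0 ((mul_comm _ _).trans hD₁),
    eq_div_of_mul_eq (div_ne_zero hz0 hz1) ((mul_comm _ _).trans hD₂)]
  field_simp
  ring

lemma continuousOn_landenDefect :
    ContinuousOn landenDefect {z : ℂ | ‖z‖ ≤ 1 ∧ z.re ≤ 1 / 2} := by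
  have hz1 : ∀ z ∈ {z : ℂ | ‖z‖ ≤ 1 ∧ z.re ≤ 1 / 2}, z - 1 ≠ 0 :=
    fun z hz => sub_one_ne_zero_of_re_lt_one (by linarith [hz.2])
  refine ((continuousOn_Li one_lt_two).mono fun z hz => mem_closedBall_zero_iff.mpr hz.1).add
    ((continuousOn_Li one_lt_two).comp
      (continuousOn_id.div (continuousOn_id.sub continuousOn_const) hz1) fun z hz => ?_)
    |>.add fun z hz => ?_
  · change z / (z - 1) ∈ closedBall 0 1
    rw [mem_closedBall_zero_iff, norm_div, div_le_one (norm_pos_iff.mpr (hz1 z hz))]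
    exact norm_le_norm_sub_one_iff.mpr hz.2
  · exact (((by fun_prop : ContinuousAt (fun y : ℂ => 1 - y) z).clog
      (one_sub_mem_slitPlane (by linarith [hz.2]))).pow 2 |>.div_const 2).continuousWithinAt

theorem Li_two_add_Li_two_div_sub_one (hz : ‖z‖ ≤ 1) (hre : z.re ≤ 1 / 2) :
    Li 2 z + Li 2 (z / (z - 1)) = -(log (1 - z) ^ 2 / 2) := by
  have hnorm (t : ℝ) (ht : 0 ≤ t) : ‖(t : ℂ) * z‖ = t * ‖z‖ := by
    rw [norm_mul, norm_real, Real.norm_of_nonneg ht]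
  have hcont : ContinuousOn (fun t : ℝ => landenDefect (t * z)) (Icc 0 1) := by
    refine continuousOn_landenDefect.comp (by fun_prop) fun t ht => ⟨?_, ?_⟩
    · rw [hnorm t ht.1]; nlinarith [ht.1, ht.2, norm_nonneg z]
    · rw [re_ofReal_mul]; nlinarith [ht.1, ht.2]
  have hderiv (t : ℝ) (ht : t ∈ Ico 0 1) :
      HasDerivWithinAt (fun t : ℝ => landenDefect (t * z)) 0 (Ici t) t := by
    have hlt : ‖(t : ℂ) * z‖ < 1 := by
      rw [hnorm t ht.1]; nlinarith [ht.1, ht.2, norm_nonneg z]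
    have hre' : ((t : ℂ) * z).re < 1 / 2 := by rw [re_ofReal_mul]; nlinarith [ht.1, ht.2]
    simpa using (((hasDerivAt_landenDefect hlt hre').comp (t : ℂ)
      ((hasDerivAt_id _).mul_const z)).comp_ofReal).hasDerivWithinAt
  have h := constant_of_has_deriv_right_zero hcont hderiv 1 (by simp)
  rw [ofReal_one, one_mul, ofReal_zero, zero_mul, landenDefect_zero, landenDefect] at h
  linear_combination h

end Landen

section SpecialValues

open Real

lemma log_one_sub_I : log (1 - I) = (Real.log 2 / 2 : ℝ) - (π / 4 : ℝ) * I := by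
  have hpolar : 1 - I = (√2 : ℝ) * exp ((-(π / 4) : ℝ) * I) := by
    rw [exp_mul_I, ← ofReal_cos, ← ofReal_sin, Real.cos_neg, Real.sin_neg, cos_pi_div_four,
      sin_pi_div_four]
    apply Complex.ext <;> simp <;> ring_nf <;> simp
  rw [hpolar, log_ofReal_mul (by positivity) (exp_ne_zero _),
    log_exp (by simp; linarith [pi_pos]) (by simp; linarith [pi_pos]), Real.log_sqrt zero_le_two]
  push_cast
  ring

lemma im_log_one_sub_I_sq : (log (1 - I) ^ 2).im = -(π * Real.log 2 / 4) := by
  simp only [log_one_sub_I, sq, mul_im, sub_re, sub_im, ofReal_re, ofReal_im, I_re, I_im, mul_re,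
    mul_im]
  ring

lemma ofReal_inv_sqrt_two_mul_exp :
    ((1 / √2 : ℝ) : ℂ) * exp (3 * π / 4 * I) = (-1 + I) / 2 := by
  have hangle : 3 * π / 4 = π - π / 4 := by ring
  rw [show (3 * π / 4 : ℂ) = (3 * π / 4 : ℝ) by push_cast; ring, exp_mul_I, ← ofReal_cos,
    ← ofReal_sin, hangle, Real.cos_pi_sub, Real.sin_pi_sub, cos_pi_div_four, sin_pi_div_four]
  apply Complex.ext <;> simp <;> ring_nf <;> norm_num

lemma ofReal_half_mul_exp : ((1 / 2 : ℝ) : ℂ) * exp (π / 2 * I) = I / 2 := by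
  rw [show (π / 2 : ℂ) = (π / 2 : ℝ) by push_cast; ring, exp_mul_I, ← ofReal_cos,
    ← ofReal_sin, Real.cos_pi_div_two, Real.sin_pi_div_two]
  push_cast
  ring

end SpecialValues

theorem stmt10 : 2 * catalanG - Real.pi * Real.log 2 / 4 = 2 * (Li 2 (((1 / Real.sqrt 2 : ℝ) : ℂ) * Complex.exp ((3 * Real.pi / 4) * Complex.I))).im + (Li 2 (((1/2 : ℝ) : ℂ) * Complex.exp ((Real.pi / 2) * Complex.I))).im := by
  rw [ofReal_inv_sqrt_two_mul_exp, ofReal_half_mul_exp]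
  have hw : ‖(1 + I) / 2‖ ≤ 1 := by
    rw [norm_div, Complex.norm_two, div_le_one two_pos]
    exact (norm_add_le _ _).trans (by simp; norm_num)
  have hconj₁ : I / (I - 1) = conj ((1 + I) / 2) := by
    apply Complex.ext <;> simp [div_re, div_im, normSq] <;> norm_num
  have hconj₂ : -((1 + I) / 2) = conj ((-1 + I) / 2) := by
    simp [conj_ofNat]
    ring
  have hsq : ((1 + I) / 2) ^ 2 = I / 2 := by linear_combination I_sq / 4
  have landen := congrArg im (Li_two_add_Li_two_div_sub_one (z := I) (by simp) (by simp))
  rw [add_im, hconj₁, im_Li_conj, show (Li 2 I).im = catalanG from im_Li_I one_lt_two, neg_im,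
    div_ofNat_im, im_log_one_sub_I_sq] at landen
  have dup := congrArg im (Li_add_Li_neg one_lt_two hw)
  rw [add_im, hconj₂, im_Li_conj, hsq] at dup
  norm_num at dup
  linarith
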